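/- Let G be a finite simple graph with vertex set V of size n and edge set E. Then c_0(G) − c_1(G) = Σ_{A ⊆ E} (−2)^{|A|} · 2^{n − f_G(A)}, where for A ⊆ E, f_G(A) denotes the number of vertices of G incident to at least one edge in A, and the sum ranges over all subsets A of E (computed in ℤ; note f_G(A) ≤ n, so each summand is an integer). Equivalently, the amplitude a(G) = (c_0(G) − c_1(G))/2^n satisfies a(G) = Σ_{A ⊆ E} (−2)^{|A|}/2^{f_G(A)}. -/
import Mathlib


attribute [local instance] Classical.propDecidable

/-- The number of 2-colorings (`1` = black) of the vertices of `G` for which the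
number of black-black edges is even. -/
noncomputable def colEven {V : Type*} [Fintype V] (G : SimpleGraph V) : ℕ :=
  (Finset.univ.filter fun x : V → Fin 2 =>
    Even (G.edgeFinset.filter fun e => ∀ v ∈ e, x v = 1).card).card

/-- The number of 2-colorings of the vertices of `G` for which the
number of black-black edges is odd. -/
noncomputable def colOdd {V : Type*} [Fintype V] (G : SimpleGraph V) : ℕ :=
  (Finset.univ.filter fun x : V → Fin 2 =>
    Odd (G.edgeFinset.filter fun e => ∀ v ∈ e, x v = 1).card).card

/-- `fG G A` is the number of vertices of `G` incident to at least one edge in `A`. -/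
noncomputable def fG {V : Type*} [Fintype V] (G : SimpleGraph V)
    (A : Finset (Sym2 V)) : ℕ :=
  (Finset.univ.filter fun v : V => ∃ e ∈ A, v ∈ e).card

lemma count_all_one {V : Type*} [Fintype V] (T : Finset V) :
    (Finset.univ.filter fun x : V → Fin 2 => ∀ v ∈ T, x v = 1).card
      = 2 ^ (Fintype.card V - T.card) := by
  classical
  rw [← Fintype.card_subtype]
  have e : {x : V → Fin 2 // ∀ v ∈ T, x v = 1} ≃ (↥(Tᶜ) → Fin 2) :=
  { toFun := fun x v => x.1 v
    invFun := fun y => ⟨fun v => if h : v ∈ T then 1 else y ⟨v, by simpa using h⟩,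
      fun v hv => dif_pos hv⟩
    left_inv := by
      intro x
      ext v
      by_cases h : v ∈ T
      · simp [h, x.2 v h]
      · simp [h]
    right_inv := by
      intro y
      funext v
      have hv : (v : V) ∉ T := Finset.mem_compl.mp v.2
      simp [hv] }
  rw [Fintype.card_congr e]
  simp [Finset.card_compl]

lemma key_identity {V : Type*} [Fintype V] (G : SimpleGraph V) :
    (colEven G : ℤ) - colOdd G =
      ∑ A ∈ G.edgeFinset.powerset,
        (-2 : ℤ) ^ A.card * 2 ^ (Fintype.card V - fG G A) := by
  classical
  set P : (V → Fin 2) → ℕ := fun x => (G.edgeFinset.filter fun e => ∀ v ∈ e, x v = 1).card with hP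
  have step1 : (colEven G : ℤ) - colOdd G = ∑ x : V → Fin 2, (-1 : ℤ) ^ P x := by
    rw [← Finset.sum_filter_add_sum_filter_not Finset.univ (fun x => Even (P x))]
    have e1 : ∑ x ∈ Finset.univ.filter (fun x : V → Fin 2 => Even (P x)), (-1:ℤ) ^ P x
        = colEven G := by
      rw [Finset.sum_congr rfl (fun x hx => Even.neg_one_pow (Finset.mem_filter.mp hx).2)]
      simp [colEven, hP]
    have e2 : ∑ x ∈ Finset.univ.filter (fun x : V → Fin 2 => ¬ Even (P x)), (-1:ℤ) ^ P x
        = -(colOdd G) := by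
      rw [Finset.sum_congr rfl (fun x hx =>
        Odd.neg_one_pow (Nat.not_even_iff_odd.mp (Finset.mem_filter.mp hx).2))]
      simp only [Finset.sum_const, nsmul_eq_mul, mul_neg_one]
      congr 2
      rw [colOdd]
      congr 1
      apply Finset.filter_congr
      intro x _
      simp [hP, Nat.not_even_iff_odd]
    rw [e1, e2, ← sub_eq_add_neg]
  have step2 : ∀ x : V → Fin 2,
      (-1 : ℤ) ^ P x
      = ∑ A ∈ G.edgeFinset.powerset,
          ∏ e ∈ A, (if (∀ v ∈ e, x v = 1) then (-2:ℤ) else 0) := by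
    intro x
    have c1 : (-1 : ℤ) ^ P x
        = ∏ e ∈ G.edgeFinset, (if (∀ v ∈ e, x v = 1) then (-1:ℤ) else 1) := by
      rw [Finset.prod_ite, Finset.prod_const, Finset.prod_const, one_pow, mul_one]
    have c2 : ∀ e ∈ G.edgeFinset,
        (if (∀ v ∈ e, x v = 1) then (-1:ℤ) else 1)
        = (if (∀ v ∈ e, x v = 1) then (-2:ℤ) else 0) + 1 := by
      intro e _; split_ifs <;> ring
    rw [c1, Finset.prod_congr rfl c2, Finset.prod_add]
    refine Finset.sum_congr rfl fun A hA => ?_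
    simp
  rw [step1]
  rw [Finset.sum_congr rfl (fun x _ => step2 x), Finset.sum_comm]
  refine Finset.sum_congr rfl fun A hA => ?_
  have hprod : ∀ x : V → Fin 2,
      (∏ e ∈ A, (if (∀ v ∈ e, x v = 1) then (-2:ℤ) else 0))
      = if (∀ v ∈ (Finset.univ.filter fun v : V => ∃ e ∈ A, v ∈ e), x v = 1)
          then (-2:ℤ) ^ A.card else 0 := by
    intro x
    by_cases h : ∀ v ∈ Finset.univ.filter (fun v : V => ∃ e ∈ A, v ∈ e), x v = 1
    · rw [if_pos h,
        Finset.prod_congr rfl (fun e he => if_pos (fun v hv => h v (by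
          simp only [Finset.mem_filter, Finset.mem_univ, true_and]
          exact ⟨e, he, hv⟩)))]
      simp
    · rw [if_neg h]
      push_neg at h
      obtain ⟨v, hv, hv1⟩ := h
      simp only [Finset.mem_filter, Finset.mem_univ, true_and] at hv
      obtain ⟨e, he, hve⟩ := hv
      exact Finset.prod_eq_zero he (if_neg (fun hh => hv1 (hh v hve)))
  rw [Finset.sum_congr rfl (fun x _ => hprod x), Finset.sum_ite, Finset.sum_const,
    Finset.sum_const_zero, add_zero]
  have hc := count_all_one (V := V) (Finset.univ.filter fun v : V => ∃ e ∈ A, v ∈ e)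
  have heq : (Finset.univ.filter fun x : V → Fin 2 =>
        ∀ v ∈ (Finset.univ.filter fun v : V => ∃ e ∈ A, v ∈ e), x v = 1).card
      = 2 ^ (Fintype.card V - fG G A) := hc
  rw [heq, nsmul_eq_mul]
  push_cast
  ring

theorem stmt_17 {V : Type*} [Fintype V] (G : SimpleGraph V) (n : ℕ)
    (hn : n = Fintype.card V) :
    (colEven G : ℤ) - colOdd G =
      ∑ A ∈ G.edgeFinset.powerset, (-2 : ℤ) ^ A.card * 2 ^ (n - fG G A) ∧
    ((colEven G : ℚ) - colOdd G) / 2 ^ n =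
      ∑ A ∈ G.edgeFinset.powerset, (-2 : ℚ) ^ A.card / 2 ^ fG G A := by
  classical
  subst hn
  have hkey := key_identity G
  refine ⟨hkey, ?_⟩
  have h2 : ((colEven G : ℚ) - colOdd G)
      = ∑ A ∈ G.edgeFinset.powerset,
          (-2 : ℚ) ^ A.card * 2 ^ (Fintype.card V - fG G A) := by
    exact_mod_cast congrArg (fun z : ℤ => (z : ℚ)) hkey
  rw [h2, Finset.sum_div]
  refine Finset.sum_congr rfl fun A hA => ?_
  have hf : fG G A ≤ Fintype.card V := by
    rw [← Finset.card_univ]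
    exact Finset.card_filter_le _ _
  have hpow : (2:ℚ) ^ (Fintype.card V - fG G A) * 2 ^ fG G A = 2 ^ Fintype.card V := by
    rw [← pow_add, Nat.sub_add_cancel hf]
  rw [div_eq_div_iff (by positivity) (by positivity), mul_assoc, hpow]
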